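/- arXiv:hep-th/0111192 — 3 statements merged into one kernel-verified Lean document; each statement's English description precedes it below -/
import Mathlib

section
/- The minimal subtraction projection ⟨·⟩ on formal Laurent series, defined by ⟨∑_{j≥−r} c_j ε^j⟩ = ∑_{j=−r}^{−1} c_j ε^j (projection onto the strictly negative powers), satisfies the Rota–Baxter identity of weight −1: ⟨ab⟩ + ⟨a⟩⟨b⟩ = ⟨a⟨b⟩⟩ + ⟨⟨a⟩b⟩ for all Laurent series a, b with finite-order poles. -/
/-- The minimal subtraction projection on Laurent series: keep only the terms with
strictly negative exponent (the pole part). -/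
noncomputable def msProj (a : LaurentSeries ℚ) : LaurentSeries ℚ :=
  ⟨fun n => if n < 0 then a.coeff n else 0,
   a.isPWO_support'.mono (by
     intro n hn
     simp only [Function.mem_support] at hn ⊢
     intro h
     simp [h] at hn)⟩

/-! Writing `x = P x + (x - P x)`, both sides of the Rota–Baxter identity expand into the four
products of the parts of `x` and `y`; the identity holds as soon as `P` fixes the product of two
`P`-parts and kills the product of two complementary parts. For the pole part of Laurent series
this is the statement that products of polar parts are polar and products of regular parts are
regular. -/

open Set

theorem rotaBaxter_of_mul_range_of_mul_ker {V : Type*} [NonUnitalNonAssocRing V] (P : V →+ V)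
    (hrange : ∀ x y, P (P x * P y) = P x * P y)
    (hker : ∀ x y, P ((x - P x) * (y - P y)) = 0) (x y : V) :
    P (x * y) + P x * P y = P (x * P y) + P (P x * y) := by
  set p := P x
  set r := P y
  set q := x - p
  set s := y - r
  have hx : x = p + q := (add_sub_cancel p x).symm
  have hy : y = r + s := (add_sub_cancel r y).symm
  calc P (x * y) + p * r
      = P (p * r) + P (p * s) + P (q * r) + P (q * s) + p * r := by
        rw [hx, hy, add_mul, mul_add, mul_add]; simp only [map_add]; abel
    _ = (P (p * r) + P (q * r)) + (P (p * r) + P (p * s)) := by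
        rw [hker, hrange]; abel
    _ = P (x * r) + P (p * y) := by
        rw [hx, hy, add_mul, mul_add, map_add, map_add]

namespace HahnSeries

variable {Γ R : Type*} [AddCommMonoid Γ] [PartialOrder Γ] [IsOrderedCancelAddMonoid Γ]
  [NonUnitalNonAssocSemiring R] {x y : HahnSeries Γ R}

theorem support_mul_subset_Iio_zero (hx : x.support ⊆ Iio 0) (hy : y.support ⊆ Iio 0) :
    (x * y).support ⊆ Iio 0 :=
  support_mul_subset.trans <| (add_subset_add (hx.trans Iio_subset_Iic_self) hy).trans <| by
    simpa using Iic_add_Iio_subset (0 : Γ) 0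

theorem support_mul_subset_Ici_zero (hx : x.support ⊆ Ici 0) (hy : y.support ⊆ Ici 0) :
    (x * y).support ⊆ Ici 0 :=
  support_mul_subset.trans <| (add_subset_add hx hy).trans <| by
    simpa using Ici_add_Ici_subset (0 : Γ) 0

end HahnSeries

theorem msProj_coeff (a : LaurentSeries ℚ) (n : ℤ) :
    (msProj a).coeff n = if n < 0 then a.coeff n else 0 := rfl

theorem msProj_add (a b : LaurentSeries ℚ) : msProj (a + b) = msProj a + msProj b := by
  ext n
  simp only [msProj_coeff, HahnSeries.coeff_add]
  split_ifs <;> simp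

theorem msProj_eq_self (a : LaurentSeries ℚ) (h : a.support ⊆ Iio 0) : msProj a = a := by
  ext n
  rw [msProj_coeff, ite_eq_left_iff]
  intro hn
  by_contra hc
  exact hn (h ((HahnSeries.mem_support _ _).2 (Ne.symm hc)))

theorem msProj_eq_zero (a : LaurentSeries ℚ) (h : a.support ⊆ Ici 0) : msProj a = 0 := by
  ext n
  rw [msProj_coeff, HahnSeries.coeff_zero, ite_eq_right_iff]
  intro hn
  by_contra hc
  exact not_le.2 hn (h ((HahnSeries.mem_support _ _).2 hc))

theorem support_msProj_subset (a : LaurentSeries ℚ) : (msProj a).support ⊆ Iio 0 := by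
  intro n hn
  by_contra hc
  exact hn (if_neg hc)

theorem support_sub_msProj_subset (a : LaurentSeries ℚ) : (a - msProj a).support ⊆ Ici 0 := by
  intro n hn
  by_contra hc
  apply hn
  rw [HahnSeries.coeff_sub, msProj_coeff, if_pos (not_le.1 hc), sub_self]

/-- The minimal subtraction projection satisfies the Rota–Baxter identity of weight `−1`:
`⟨ab⟩ + ⟨a⟩⟨b⟩ = ⟨a⟨b⟩⟩ + ⟨⟨a⟩b⟩`. -/
theorem msProj_rotaBaxter (a b : LaurentSeries ℚ) :
    msProj (a * b) + msProj a * msProj b =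
      msProj (a * msProj b) + msProj (msProj a * b) :=
  rotaBaxter_of_mul_range_of_mul_ker (AddMonoidHom.mk' msProj msProj_add)
    (fun x y => msProj_eq_self _ <| HahnSeries.support_mul_subset_Iio_zero
      (support_msProj_subset x) (support_msProj_subset y))
    (fun x y => msProj_eq_zero _ <| HahnSeries.support_mul_subset_Ici_zero
      (support_sub_msProj_subset x) (support_sub_msProj_subset y))
    a b
end

section
/- Let φ, ψ be two algebra homomorphisms from a Hopf algebra H into a commutative ring V of Laurent series, and suppose Γ ∈ H satisfies Δ(Γ) = Γ⊗1 + 1⊗Γ + ∑_γ γ ⊗ Γ/γ with all γ, Γ/γ in the augmentation ideal. If φ(Γ) − ψ(Γ) has no pole (is holomorphic at ε = 0) and φ(γ) = ψ(γ) for all the subterms γ and Γ/γ appearing in the reduced coproduct, then the MS counterterms agree: S_R^φ(Γ) = S_R^ψ(Γ), where S_R^φ(Γ) = −R[φ(Γ) + ∑_γ S_R^φ(γ)φ(Γ/γ)] and R is the projection onto the pole part. -/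
lemma msProj_sub (a b : LaurentSeries ℚ) : msProj (a - b) = msProj a - msProj b := by
  ext n
  by_cases h : n < 0 <;> simp [msProj, h]

lemma msProj_eq_of_msProj_sub_eq_zero {a b : LaurentSeries ℚ} (h : msProj (a - b) = 0) :
    msProj a = msProj b := by
  rwa [msProj_sub, sub_eq_zero] at h

theorem counterterms_agree_general {H : Type} [CommRing H] {ι : Type} [Fintype ι]
    (φ ψ : H →+* LaurentSeries ℚ)
    (Γ : H) (γ quot : ι → H)
    (SRφ SRψ : H → LaurentSeries ℚ)
    (hrecφ : SRφ Γ = -msProj (φ Γ + ∑ i : ι, SRφ (γ i) * φ (quot i)))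
    (hrecψ : SRψ Γ = -msProj (ψ Γ + ∑ i : ι, SRψ (γ i) * ψ (quot i)))
    (hnopole : msProj (φ Γ - ψ Γ) = 0)
    (hsub : ∀ i : ι, φ (γ i) = ψ (γ i) ∧ φ (quot i) = ψ (quot i))
    (hsubS : ∀ i : ι, SRφ (γ i) = SRψ (γ i)) :
    SRφ Γ = SRψ Γ := by
  have hsum : ∑ i : ι, SRφ (γ i) * φ (quot i) = ∑ i : ι, SRψ (γ i) * ψ (quot i) :=
    Finset.sum_congr rfl fun i _ => by rw [hsubS i, (hsub i).2]
  rw [hrecφ, hrecψ, hsum, msProj_eq_of_msProj_sub_eq_zero (by rwa [add_sub_add_right_eq_sub])]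

/-- Let `φ, ψ` be characters of a Hopf algebra `H` into Laurent series, and let
`Γ ∈ H` have reduced coproduct `∑ᵢ γᵢ ⊗ Γ/γᵢ` (indexed by a finite type `ι`), with the
MS counterterms `SRφ`, `SRψ` obeying the recursion
`S_R^φ(Γ) = −R[φ(Γ) + ∑ᵢ S_R^φ(γᵢ)·φ(Γ/γᵢ)]`.  If `φ(Γ) − ψ(Γ)` has no pole part and
`φ`, `ψ` (and recursively their counterterms) agree on all the subterms `γᵢ`, `Γ/γᵢ`,
then the counterterms agree: `S_R^φ(Γ) = S_R^ψ(Γ)`. -/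
theorem counterterms_agree {H : Type} [CommRing H] {ι : Type} [Fintype ι]
    (φ ψ : H →+* LaurentSeries ℚ) (counit : H →+* ℚ)
    (Γ : H) (γ quot : ι → H)
    (haug : ∀ i, counit (γ i) = 0 ∧ counit (quot i) = 0)
    (SRφ SRψ : H → LaurentSeries ℚ)
    (hrecφ : SRφ Γ = -msProj (φ Γ + ∑ i : ι, SRφ (γ i) * φ (quot i)))
    (hrecψ : SRψ Γ = -msProj (ψ Γ + ∑ i : ι, SRψ (γ i) * ψ (quot i)))
    (hnopole : msProj (φ Γ - ψ Γ) = 0)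
    (hsub : ∀ i : ι, φ (γ i) = ψ (γ i) ∧ φ (quot i) = ψ (quot i))
    (hsubS : ∀ i : ι, SRφ (γ i) = SRψ (γ i)) :
    SRφ Γ = SRψ Γ :=
  counterterms_agree_general φ ψ Γ γ quot SRφ SRψ hrecφ hrecψ hnopole hsub hsubS
end

section
/- The product of the Laurent expansions of the two one-loop vertex functions in Yukawa theory, Γ¹_{0,0} = F(1,1) and Γ²_{0,0} = (1/2)[F(2,0) − F(2,1) + F(1,1)], have the same residue (coefficient of 1/ε) at ε = 0, namely both equal 1: Res_{ε=0} F(1,1) = 1 and Res_{ε=0} (1/2)[F(2,0) − F(2,1) + F(1,1)] = 1. -/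
open Filter
open scoped Topology

/-- `F(a,b)` interpreted via the reciprocal Gamma function, so that `F(2,0) = 0`. -/
noncomputable def F (ε a b : ℂ) : ℂ :=
  Complex.Gamma (2 - a - ε) * Complex.Gamma (2 - b - ε) * Complex.Gamma (a + b - 2 + ε) *
    (Complex.Gamma a)⁻¹ * (Complex.Gamma b)⁻¹ * (Complex.Gamma (4 - a - b - 2 * ε))⁻¹

/-!
At `(a, b) = (1, 1)` the only singular factor is `Γ(ε)`, and at `(2, 1)` it is `Γ(-ε)`; every other
factor is continuous at `ε = 0` with value `1`. Since `ε Γ(ε) → 1`, the residues of `F(1,1)` and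
`F(2,1)` are `1` and `-1`, while `F(2,0)` vanishes identically because `1/Γ(0) = 0`.
-/

namespace Complex

lemma continuousAt_Gamma_of_re_pos {s : ℂ} (hs : 0 < s.re) : ContinuousAt Gamma s :=
  continuousAt_Gamma s fun m hm => by
    have := congrArg re hm
    simp only [neg_re, natCast_re] at this
    linarith [m.cast_nonneg (α := ℝ)]

lemma tendsto_Gamma_sub_mul_nhds_zero {a c : ℂ} (ha : 0 < a.re) :
    Tendsto (fun ε : ℂ => Gamma (a - c * ε)) (𝓝 0) (𝓝 (Gamma a)) :=
  (continuousAt_Gamma_of_re_pos ha).tendsto.comp <|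
    (by fun_prop : Continuous fun ε : ℂ => a - c * ε).tendsto' 0 a (by simp)

lemma tendsto_neg_self_mul_Gamma_neg_nhds_zero :
    Tendsto (fun z : ℂ => -z * Gamma (-z)) (𝓝[≠] 0) (𝓝 1) := by
  refine tendsto_self_mul_Gamma_nhds_zero.comp ?_
  rw [tendsto_nhdsWithin_iff]
  exact ⟨by simpa using (tendsto_neg (0 : ℂ)).mono_left nhdsWithin_le_nhds,
    eventually_nhdsWithin_of_forall fun z hz => neg_ne_zero.mpr hz⟩

end Complex

open Complex

lemma F_two_zero (ε : ℂ) : F ε 2 0 = 0 := by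
  simp [F, Gamma_zero]

lemma self_mul_F_one_one (ε : ℂ) :
    ε * F ε 1 1 = ε * Gamma ε * (Gamma (1 - ε) * Gamma (1 - ε) * (Gamma (2 - 2 * ε))⁻¹) := by
  simp only [F, Gamma_one]
  ring_nf

lemma self_mul_F_two_one (ε : ℂ) :
    ε * F ε 2 1 =
      -(-ε * Gamma (-ε) * (Gamma (1 - ε) * Gamma (1 + ε) * (Gamma (1 - 2 * ε))⁻¹)) := by
  simp only [F, Gamma_one, Gamma_ofNat_eq_factorial, Nat.factorial_one, Nat.cast_one]
  ring_nf

lemma tendsto_self_mul_F_one_one : Tendsto (fun ε : ℂ => ε * F ε 1 1) (𝓝[≠] 0) (𝓝 1) := by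
  have hreg := ((tendsto_Gamma_sub_mul_nhds_zero (a := 1) (c := 1) (by simp)).mul
    (tendsto_Gamma_sub_mul_nhds_zero (a := 1) (c := 1) (by simp))).mul
    ((tendsto_Gamma_sub_mul_nhds_zero (a := 2) (c := 2) (by simp)).inv₀ (by simp))
  simpa [self_mul_F_one_one] using
    tendsto_self_mul_Gamma_nhds_zero.mul (hreg.mono_left nhdsWithin_le_nhds)

lemma tendsto_self_mul_F_two_one : Tendsto (fun ε : ℂ => ε * F ε 2 1) (𝓝[≠] 0) (𝓝 (-1)) := by
  have hreg := ((tendsto_Gamma_sub_mul_nhds_zero (a := 1) (c := 1) (by simp)).mul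
    (tendsto_Gamma_sub_mul_nhds_zero (a := 1) (c := -1) (by simp))).mul
    ((tendsto_Gamma_sub_mul_nhds_zero (a := 1) (c := 2) (by simp)).inv₀ (by simp))
  simpa [self_mul_F_two_one] using
    (tendsto_neg_self_mul_Gamma_neg_nhds_zero.mul (hreg.mono_left nhdsWithin_le_nhds)).neg

/-- The two one-loop Yukawa vertex functions `Γ¹_{0,0} = F(1,1)` and
`Γ²_{0,0} = (1/2)[F(2,0) − F(2,1) + F(1,1)]` both have residue `1` at `ε = 0`. -/
theorem residues_equal_one :
    Tendsto (fun ε : ℂ => ε * F ε 1 1) (𝓝[≠] (0 : ℂ)) (𝓝 1) ∧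
      Tendsto (fun ε : ℂ => ε * ((1 / 2 : ℂ) * (F ε 2 0 - F ε 2 1 + F ε 1 1)))
        (𝓝[≠] (0 : ℂ)) (𝓝 1) := by
  refine ⟨tendsto_self_mul_F_one_one, ?_⟩
  have hlim := (tendsto_self_mul_F_two_one.neg.add tendsto_self_mul_F_one_one).const_mul (1 / 2 : ℂ)
  norm_num at hlim
  convert hlim using 2 with ε
  rw [F_two_zero]
  ring
end
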